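/- Assume the coordinate quasi-Codazzi setup on U and that Φ⁺ x and Φ⁻ x are invertible linear maps for every x ∈ U. Define induced connections on vector fields by ∇̃⁺_X Y (x) := (Φ⁺ x)⁻¹ ((∇⁺_X(Φ⁺Y))(x)) and ∇̃⁻_X Y (x) := (Φ⁻ x)⁻¹ ((∇⁻_X(Φ⁻Y))(x)). Then ∇̃⁺ and ∇̃⁻ are mutually dual with respect to h: for all smooth vector fields X, Y, Z : U → ℝⁿ and all x ∈ U, fderiv ℝ (fun y ↦ h y (Y y) (Z y)) x (X x) = h x ((∇̃⁺_X Y)(x)) (Z x) + h x (Y x) ((∇̃⁻_X Z)(x)). (Paper's Lemma 3.11, in a trivialization.) -/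

import Mathlib

noncomputable section

open Set

/-- ℝⁿ. -/
abbrev Vn (n : ℕ) : Type := Fin n → ℝ

/-- Pairings (fiber metrics pairing `E⁺` with `E⁻`) on the trivialized bundle. -/
abbrev Pairn (n : ℕ) : Type := Vn n →L[ℝ] Vn n →L[ℝ] ℝ

/-- Connection forms on the trivialized bundle. -/
abbrev Connn (n : ℕ) : Type := Vn n →L[ℝ] Vn n →L[ℝ] Vn n

/-- Bundle maps `TU → E±` in the trivialization. -/
abbrev Bdln (n : ℕ) : Type := Vn n →L[ℝ] Vn n

/-- Covariant derivative of the section `ν` along the vector field `X`,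
for the connection with connection form `A`. -/
def cov {n : ℕ} (A : Vn n → Connn n) (X ν : Vn n → Vn n) (x : Vn n) : Vn n :=
  fderiv ℝ ν x (X x) + A x (X x) (ν x)

/-- Lie bracket of vector fields on an open set of ℝⁿ. -/
def lieB {n : ℕ} (X Y : Vn n → Vn n) (x : Vn n) : Vn n :=
  fderiv ℝ Y x (X x) - fderiv ℝ X x (Y x)

/-- The section `Φ±Y : x ↦ Φ± x (Y x)`. -/
def secPhi {n : ℕ} (Φ : Vn n → Bdln n) (Y : Vn n → Vn n) : Vn n → Vn n :=
  fun x => Φ x (Y x)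

/-- The induced (possibly degenerate) metric `h x y z = 2 p x (Φ⁺ x y) (Φ⁻ x z)`. -/
def hmet {n : ℕ} (p : Vn n → Pairn n) (Φp Φm : Vn n → Bdln n) (x y z : Vn n) : ℝ :=
  2 * p x (Φp x y) (Φm x z)

/-- The generalized Amari–Chentsov cubic tensor. -/
def Ctensor {n : ℕ} (p : Vn n → Pairn n) (Ap Am : Vn n → Connn n)
    (Φp Φm : Vn n → Bdln n) (X Y Z : Vn n → Vn n) (x : Vn n) : ℝ :=
  -2 * (p x (cov Ap X (secPhi Φp Y) x) (Φm x (Z x))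
        - p x (Φp x (Z x)) (cov Am X (secPhi Φm Y) x))

/-- The relative torsion `T(X,Y) = ∇_X(ΦY) − ∇_Y(ΦX) − Φ[X,Y]`. -/
def Ttor {n : ℕ} (A : Vn n → Connn n) (Φ : Vn n → Bdln n)
    (X Y : Vn n → Vn n) (x : Vn n) : Vn n :=
  cov A X (secPhi Φ Y) x - cov A Y (secPhi Φ X) x - Φ x (lieB X Y x)

/-- The Kossowski pseudo-connection. -/
def Koss {n : ℕ} (p : Vn n → Pairn n) (Φp Φm : Vn n → Bdln n)
    (X Y Z : Vn n → Vn n) (x : Vn n) : ℝ :=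
  fderiv ℝ (fun y => p y (Φp y (Y y)) (Φm y (Z y))) x (X x)
  + fderiv ℝ (fun y => p y (Φp y (Z y)) (Φm y (X y))) x (Y x)
  - fderiv ℝ (fun y => p y (Φp y (X y)) (Φm y (Y y))) x (Z x)
  - p x (Φp x (X x)) (Φm x (lieB Y Z x))
  + p x (Φp x (Y x)) (Φm x (lieB Z X x))
  + p x (Φp x (Z x)) (Φm x (lieB X Y x))

/-- The curvature of a connection form `A` at `x` in directions `v`, `w`. -/
def curvA {n : ℕ} (A : Vn n → Connn n) (x v w : Vn n) : Vn n →L[ℝ] Vn n :=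
  fderiv ℝ A x v w - fderiv ℝ A x w v + (A x v).comp (A x w) - (A x w).comp (A x v)

/-
Since `Φ⁺ x ∘ Ψ⁺ x = id`, the right-hand side is `2 (p(∇⁺_X(Φ⁺Y), Φ⁻Z) + p(Φ⁺Y, ∇⁻_X(Φ⁻Z)))`,
so the claim is twice the Leibniz rule for the pairing `p` along `X`, applied to the sections
`Φ⁺Y` and `Φ⁻Z`: differentiating `p` itself produces exactly the two connection terms, by the
duality of `A⁺` and `A⁻`.
-/

theorem ContDiffOn.differentiableAt_of_isOpen {𝕜 E F : Type*} [NontriviallyNormedField 𝕜]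
    [NormedAddCommGroup E] [NormedSpace 𝕜 E] [NormedAddCommGroup F] [NormedSpace 𝕜 F]
    {f : E → F} {U : Set E} (hf : ContDiffOn 𝕜 (⊤ : ℕ∞) f U) (hU : IsOpen U) {x : E}
    (hx : x ∈ U) : DifferentiableAt 𝕜 f x :=
  (hf.contDiffAt (hU.mem_nhds hx)).differentiableAt (by simp)

section

variable {n : ℕ} {x : Vn n}

theorem differentiableAt_secPhi {Φ : Vn n → Bdln n} {Y : Vn n → Vn n}
    (hΦ : DifferentiableAt ℝ Φ x) (hY : DifferentiableAt ℝ Y x) :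
    DifferentiableAt ℝ (secPhi Φ Y) x :=
  hΦ.clm_apply hY

theorem fderiv_pairing_eq_cov_add_cov {p : Vn n → Pairn n} {Ap Am : Vn n → Connn n}
    {σ τ : Vn n → Vn n} (hp : DifferentiableAt ℝ p x) (hσ : DifferentiableAt ℝ σ x)
    (hτ : DifferentiableAt ℝ τ x)
    (hdual : ∀ v a b : Vn n, fderiv ℝ p x v a b = p x (Ap x v a) b + p x a (Am x v b))
    (X : Vn n → Vn n) :
    fderiv ℝ (fun y => p y (σ y) (τ y)) x (X x)
      = p x (cov Ap X σ x) (τ x) + p x (σ x) (cov Am X τ x) := by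
  rw [((hp.hasFDerivAt.clm_apply hσ.hasFDerivAt).clm_apply hτ.hasFDerivAt).fderiv]
  simp only [cov, add_apply, ContinuousLinearMap.comp_apply,
    ContinuousLinearMap.flip_apply, map_add, hdual]
  ring

end

theorem statement8_general {n : ℕ} (U : Set (Vn n)) (hUopen : IsOpen U)
    (p : Vn n → Pairn n) (hpsmooth : ContDiffOn ℝ (⊤ : ℕ∞) p U)
    (Ap Am : Vn n → Connn n)
    (hdual : ∀ x ∈ U, ∀ v a b : Vn n,
      fderiv ℝ p x v a b = p x (Ap x v a) b + p x a (Am x v b))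
    (Φp Φm : Vn n → Bdln n)
    (hΦpsmooth : ContDiffOn ℝ (⊤ : ℕ∞) Φp U) (hΦmsmooth : ContDiffOn ℝ (⊤ : ℕ∞) Φm U)
    -- pointwise inverses of Φ⁺ and Φ⁻ (so Φ⁺ x and Φ⁻ x are invertible on U)
    (Ψp Ψm : Vn n → Bdln n)
    (hΨp : ∀ x ∈ U, (∀ v : Vn n, Ψp x (Φp x v) = v) ∧ (∀ v : Vn n, Φp x (Ψp x v) = v))
    (hΨm : ∀ x ∈ U, (∀ v : Vn n, Ψm x (Φm x v) = v) ∧ (∀ v : Vn n, Φm x (Ψm x v) = v)) :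
    ∀ X Y Z : Vn n → Vn n,
      ContDiffOn ℝ (⊤ : ℕ∞) X U → ContDiffOn ℝ (⊤ : ℕ∞) Y U → ContDiffOn ℝ (⊤ : ℕ∞) Z U →
      ∀ x ∈ U,
        fderiv ℝ (fun y => hmet p Φp Φm y (Y y) (Z y)) x (X x)
          = hmet p Φp Φm x (Ψp x (cov Ap X (secPhi Φp Y) x)) (Z x)
            + hmet p Φp Φm x (Y x) (Ψm x (cov Am X (secPhi Φm Z) x)) := by
  intro X Y Z _ hY hZ x hx
  have hp := hpsmooth.differentiableAt_of_isOpen hUopen hx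
  have hσ := differentiableAt_secPhi (hΦpsmooth.differentiableAt_of_isOpen hUopen hx)
    (hY.differentiableAt_of_isOpen hUopen hx)
  have hτ := differentiableAt_secPhi (hΦmsmooth.differentiableAt_of_isOpen hUopen hx)
    (hZ.differentiableAt_of_isOpen hUopen hx)
  calc fderiv ℝ (fun y => hmet p Φp Φm y (Y y) (Z y)) x (X x)
      = 2 * fderiv ℝ (fun y => p y (secPhi Φp Y y) (secPhi Φm Z y)) x (X x) := by
        rw [← smul_eq_mul, ← smul_apply,
          ← fderiv_const_mul ((hp.clm_apply hσ).clm_apply hτ)]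
        rfl
    _ = _ := by
        rw [fderiv_pairing_eq_cov_add_cov hp hσ hτ (hdual x hx), hmet, hmet,
          (hΨp x hx).2, (hΨm x hx).2]
        simp only [secPhi]
        ring

/-- Paper's Lemma 3.11 (in a trivialization): in the coordinate quasi-Codazzi setup,
if `Φ⁺ x` and `Φ⁻ x` are invertible for every `x ∈ U` (with pointwise inverses `Ψ⁺ x`,
`Ψ⁻ x`), then the induced connections `∇̃⁺_X Y = (Φ⁺)⁻¹ ∇⁺_X(Φ⁺Y)` and
`∇̃⁻_X Z = (Φ⁻)⁻¹ ∇⁻_X(Φ⁻Z)` are mutually dual with respect to `h`. -/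
theorem statement8 {n : ℕ} (U : Set (Vn n)) (hUopen : IsOpen U)
    (p : Vn n → Pairn n) (hpsmooth : ContDiffOn ℝ (⊤ : ℕ∞) p U)
    (Ap Am : Vn n → Connn n)
    (hApsmooth : ContDiffOn ℝ (⊤ : ℕ∞) Ap U) (hAmsmooth : ContDiffOn ℝ (⊤ : ℕ∞) Am U)
    (hdual : ∀ x ∈ U, ∀ v a b : Vn n,
      fderiv ℝ p x v a b = p x (Ap x v a) b + p x a (Am x v b))
    (Φp Φm : Vn n → Bdln n)
    (hΦpsmooth : ContDiffOn ℝ (⊤ : ℕ∞) Φp U) (hΦmsmooth : ContDiffOn ℝ (⊤ : ℕ∞) Φm U)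
    (hLag : ∀ x ∈ U, ∀ y z : Vn n, p x (Φp x y) (Φm x z) = p x (Φp x z) (Φm x y))
    -- pointwise inverses of Φ⁺ and Φ⁻ (so Φ⁺ x and Φ⁻ x are invertible on U)
    (Ψp Ψm : Vn n → Bdln n)
    (hΨp : ∀ x ∈ U, (∀ v : Vn n, Ψp x (Φp x v) = v) ∧ (∀ v : Vn n, Φp x (Ψp x v) = v))
    (hΨm : ∀ x ∈ U, (∀ v : Vn n, Ψm x (Φm x v) = v) ∧ (∀ v : Vn n, Φm x (Ψm x v) = v)) :
    ∀ X Y Z : Vn n → Vn n,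
      ContDiffOn ℝ (⊤ : ℕ∞) X U → ContDiffOn ℝ (⊤ : ℕ∞) Y U → ContDiffOn ℝ (⊤ : ℕ∞) Z U →
      ∀ x ∈ U,
        fderiv ℝ (fun y => hmet p Φp Φm y (Y y) (Z y)) x (X x)
          = hmet p Φp Φm x (Ψp x (cov Ap X (secPhi Φp Y) x)) (Z x)
            + hmet p Φp Φm x (Y x) (Ψm x (cov Am X (secPhi Φm Z) x)) :=
  statement8_general U hUopen p hpsmooth Ap Am hdual Φp Φm hΦpsmooth hΦmsmooth Ψp Ψm hΨp hΨm
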